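/- Let X = [1,∞) with the usual metric and the probability measure with density p(x) = 1/x². Then for every ε ≥ 0, the concentration function of X satisfies α_X(ε) = 1/(2+ε). Consequently ∫₀^∞ α_X(ε) dε = ∞, so the concentration dimension of X defined with integration to infinity equals 0. -/

import Mathlib

open MeasureTheory Metric
open scoped ENNReal

open Set

/-- The concentration function of a metric probability space:
`α(0) = 1/2` and, for `ε > 0`,
`α(ε) = 1 − inf { μ(A_ε) : A Borel, μ(A) ≥ 1/2 }`,
where `A_ε` is the open `ε`-neighbourhood (thickening) of `A`. -/
noncomputable def concFn {X : Type*} [MetricSpace X] [MeasurableSpace X]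
    (μ : Measure X) (ε : ℝ) : ℝ :=
  if ε ≤ 0 then 1/2 else
  1 - sInf {r : ℝ | ∃ A : Set X, MeasurableSet A ∧ (1/2 : ℝ≥0∞) ≤ μ A ∧
    r = (μ (thickening ε A)).toReal}

/-- The probability measure on `[1,∞)` with density `1/x²`. -/
noncomputable def muIci : Measure ↥(Set.Ici (1:ℝ)) :=
  Measure.comap Subtype.val
    ((volume : Measure ℝ).withDensity
      ((Set.Ici (1:ℝ)).indicator fun x => ENNReal.ofReal (1/x^2)))

noncomputable def nuR : Measure ℝ :=
  (volume : Measure ℝ).withDensity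
    ((Set.Ici (1:ℝ)).indicator fun x => ENNReal.ofReal (1/x^2))

lemma nuR_Ici {a : ℝ} (ha : 1 ≤ a) : nuR (Ici a) = ENNReal.ofReal a⁻¹ := by
  have ha0 : (0:ℝ) < a := by linarith
  rw [nuR, withDensity_apply _ measurableSet_Ici]
  have h1 : ∫⁻ x in Ici a, (Set.Ici (1:ℝ)).indicator (fun x => ENNReal.ofReal (1/x^2)) x
      = ∫⁻ x in Ici a, ENNReal.ofReal (1/x^2) := by
    apply setLIntegral_congr_fun measurableSet_Ici
    intro x hx
    exact Set.indicator_of_mem (le_trans ha hx) _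
  rw [h1]
  have h2 : ∫⁻ x in Ici a, ENNReal.ofReal (1/x^2)
      = ENNReal.ofReal (∫ x in Ici a, 1/x^2) := by
    rw [← ofReal_integral_eq_lintegral_ofReal]
    · have : IntegrableOn (fun x : ℝ => x ^ (-2 : ℝ)) (Ioi a) :=
        integrableOn_Ioi_rpow_of_lt (by norm_num) ha0
      rw [← IntegrableOn, integrableOn_Ici_iff_integrableOn_Ioi]
      apply this.congr_fun ?_ measurableSet_Ioi
      intro x hx
      show x ^ (-2:ℝ) = 1/x^2
      rw [Real.rpow_neg (le_of_lt (ha0.trans hx)), Real.rpow_two]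
      simp [one_div]
    · filter_upwards with x
      positivity
  rw [h2]
  congr 1
  rw [integral_Ici_eq_integral_Ioi]
  have h3 : ∀ x ∈ Ioi a, x ^ (-2:ℝ) = 1/x^2 := by
    intro x hx
    show x ^ (-2:ℝ) = 1/x^2
    rw [Real.rpow_neg (le_of_lt (ha0.trans hx)), Real.rpow_two]
    simp [one_div]
  rw [← setIntegral_congr_fun measurableSet_Ioi h3, integral_Ioi_rpow_of_lt (by norm_num) ha0]
  norm_num
  rw [Real.rpow_neg_one]

lemma nuR_ac : nuR ≪ (volume : Measure ℝ) := withDensity_absolutelyContinuous _ _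

lemma nuR_singleton (t : ℝ) : nuR {t} = 0 := nuR_ac (Real.volume_singleton)

lemma nuR_Ioi {a : ℝ} (ha : 1 ≤ a) : nuR (Ioi a) = ENNReal.ofReal a⁻¹ := by
  have : Ici a = {a} ∪ Ioi a := by
    ext x; simp [le_iff_lt_or_eq, mem_Ioi, or_comm, eq_comm]
  have h2 := nuR_Ici ha
  rw [this, measure_union (by simp) measurableSet_Ioi, nuR_singleton, zero_add] at h2
  exact h2

lemma nuR_Icc {t : ℝ} (ht : 1 ≤ t) : nuR (Icc 1 t) = ENNReal.ofReal (1 - t⁻¹) := by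
  have hsplit : Ici (1:ℝ) = Icc 1 t ∪ Ioi t := by
    ext x; simp only [mem_Ici, mem_union, mem_Icc, mem_Ioi]
    constructor
    · intro h; rcases le_or_gt x t with h'|h' <;> tauto
    · rintro (⟨h, _⟩|h) <;> linarith
  have hd : Disjoint (Icc 1 t) (Ioi t) := by
    rw [Set.disjoint_left]; rintro x ⟨_, h1⟩ h2; exact absurd h1 (not_le.mpr h2)
  have := nuR_Ici (le_refl (1:ℝ))
  rw [hsplit, measure_union hd measurableSet_Ioi, nuR_Ioi ht] at this
  have ht0 : (0:ℝ) < t := by linarith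
  have hle : t⁻¹ ≤ 1 := by rw [inv_le_one_iff₀]; right; exact ht
  have h1 : ENNReal.ofReal (1 - t⁻¹) + ENNReal.ofReal t⁻¹ = ENNReal.ofReal 1⁻¹ := by
    rw [← ENNReal.ofReal_add (by linarith) (by positivity)]
    norm_num
  have hfin : nuR (Icc 1 t) ≠ ⊤ := by
    intro h; rw [h] at this; simp at this
  -- from this : nuR (Icc 1 t) + ofReal t⁻¹ = ofReal 1⁻¹
  have := this.symm
  rw [← h1] at this
  exact ((ENNReal.add_left_inj (by simp)).mp this).symm

lemma nuR_Ico {t : ℝ} (ht : 1 ≤ t) : nuR (Ico 1 t) = ENNReal.ofReal (1 - t⁻¹) := by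
  have : Icc 1 t = Ico 1 t ∪ {t} := by
    ext x; simp only [mem_Icc, mem_union, mem_Ico, mem_singleton_iff]
    constructor
    · rintro ⟨h1, h2⟩; rcases lt_or_eq_of_le h2 with h|h <;> tauto
    · rintro (⟨h1,h2⟩|h) <;> constructor <;> first | linarith | (subst h; linarith) | (subst h; rfl)
  have h2 := nuR_Icc ht
  rw [this, measure_union (by simp only [Set.disjoint_left, mem_Ico, mem_singleton_iff]; rintro a ⟨_, h⟩; exact ne_of_lt h) (measurableSet_singleton t),
    nuR_singleton, add_zero] at h2
  exact h2

abbrev XX := ↥(Set.Ici (1:ℝ))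

lemma muIci_eq : muIci = Measure.comap Subtype.val nuR := rfl

lemma muIci_apply (S : Set XX) : muIci S = nuR (Subtype.val '' S) := by
  rw [muIci_eq]
  exact (MeasurableEmbedding.subtype_coe measurableSet_Ici).comap_apply nuR S

lemma image_setOf (p : ℝ → Prop) :
    (Subtype.val '' {x : XX | p ↑x}) = {y : ℝ | 1 ≤ y ∧ p y} := by
  ext y
  constructor
  · rintro ⟨⟨z, hz⟩, hp, rfl⟩; exact ⟨hz, hp⟩
  · rintro ⟨h1, hp⟩; exact ⟨⟨y, h1⟩, hp, rfl⟩

lemma mu_Ici_sub {a : ℝ} (ha : 1 ≤ a) : muIci {x : XX | a ≤ ↑x} = ENNReal.ofReal a⁻¹ := by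
  rw [muIci_apply, image_setOf]
  have : {y : ℝ | 1 ≤ y ∧ a ≤ y} = Ici a := by
    ext y; simp only [mem_setOf_eq, mem_Ici]; constructor
    · tauto
    · intro h; exact ⟨le_trans ha h, h⟩
  rw [this, nuR_Ici ha]

lemma mu_Iic_sub {t : ℝ} (ht : 1 ≤ t) : muIci {x : XX | (x:ℝ) ≤ t} = ENNReal.ofReal (1 - t⁻¹) := by
  rw [muIci_apply,
    show Subtype.val '' {x : XX | (x:ℝ) ≤ t} = {y : ℝ | 1 ≤ y ∧ y ≤ t} from image_setOf (fun y => y ≤ t)]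
  have : {y : ℝ | 1 ≤ y ∧ y ≤ t} = Icc 1 t := rfl
  rw [this, nuR_Icc ht]

lemma mu_Iio_sub {t : ℝ} (ht : 1 ≤ t) : muIci {x : XX | (x:ℝ) < t} = ENNReal.ofReal (1 - t⁻¹) := by
  rw [muIci_apply,
    show Subtype.val '' {x : XX | (x:ℝ) < t} = {y : ℝ | 1 ≤ y ∧ y < t} from image_setOf (fun y => y < t)]
  have : {y : ℝ | 1 ≤ y ∧ y < t} = Ico 1 t := rfl
  rw [this, nuR_Ico ht]

instance : IsProbabilityMeasure muIci := by
  constructor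
  have : (univ : Set XX) = {x : XX | (1:ℝ) ≤ ↑x} := by
    ext x; simp only [mem_univ, mem_setOf_eq, true_iff]; exact x.2
  rw [this, mu_Ici_sub le_rfl]
  norm_num

lemma meas_setOf_le {a : ℝ} : MeasurableSet {x : XX | a ≤ (x:ℝ)} :=
  measurable_subtype_coe measurableSet_Ici

lemma meas_setOf_le' {t : ℝ} : MeasurableSet {x : XX | (x:ℝ) ≤ t} :=
  measurable_subtype_coe measurableSet_Iic

lemma aux_inv_diff {u v : ℝ} (hu : u ≠ 0) (hv : v ≠ 0) :
    u⁻¹ - v⁻¹ = (v - u) * (u⁻¹ * v⁻¹) := by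
  field_simp

lemma key_lower {ε : ℝ} (hε : 0 < ε) {A : Set XX} (hA : MeasurableSet A)
    (hA2 : (1/2 : ℝ≥0∞) ≤ muIci A) :
    (muIci ((thickening ε A)ᶜ)).toReal ≤ (2+ε)⁻¹ := by
  set μ := muIci with hμ
  set B := (thickening ε A)ᶜ with hBdef
  have hBmeas : MeasurableSet B := isOpen_thickening.measurableSet.compl
  have hfin : ∀ S : Set XX, μ S ≠ ⊤ := fun S => measure_ne_top μ S
  have hmono : ∀ {S T : Set XX}, S ⊆ T → (μ S).toReal ≤ (μ T).toReal :=
    fun h => ENNReal.toReal_mono (hfin _) (measure_mono h)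
  have hhalf : (1/2:ℝ) ≤ (μ A).toReal := by
    have := ENNReal.toReal_mono (hfin A) hA2
    simpa using this
  -- A nonempty
  have hAne : A.Nonempty := by
    rcases Set.eq_empty_or_nonempty A with h|h
    · exfalso; rw [h] at hhalf; simp at hhalf; linarith
    · exact h
  have hABdisj : ∀ x ∈ A, x ∉ B := by
    intro x hx hxB
    exact hxB (self_subset_thickening hε A hx)
  -- infimum of A
  set sA : Set ℝ := Subtype.val '' A with hsA
  have hsAne : sA.Nonempty := hAne.image _
  have hsAbdd : BddBelow sA := ⟨1, by rintro y ⟨z, _, rfl⟩; exact z.2⟩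
  set a₀ : ℝ := sInf sA with ha₀
  have ha₀1 : 1 ≤ a₀ := le_csInf hsAne (by rintro y ⟨z, _, rfl⟩; exact z.2)
  have hAsub : A ⊆ {x : XX | a₀ ≤ (x:ℝ)} := by
    intro x hx; exact csInf_le hsAbdd ⟨x, hx, rfl⟩
  have ha₀2 : a₀ ≤ 2 := by
    have h1 : (μ A).toReal ≤ a₀⁻¹ := by
      have := hmono hAsub
      rwa [mu_Ici_sub ha₀1, ENNReal.toReal_ofReal (by positivity)] at this
    have h2 : (1/2:ℝ) ≤ a₀⁻¹ := le_trans hhalf h1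
    have ha₀0 : (0:ℝ) < a₀ := by linarith
    rw [le_inv_comm₀ (by norm_num) ha₀0] at h2
    linarith [h2]
  -- separation
  have hsep : ∀ x ∈ B, ∀ z ∈ A, ε ≤ |(x:ℝ) - (z:ℝ)| := by
    intro x hx z hz
    by_contra h
    push_neg at h
    apply hx
    rw [mem_thickening_iff]
    exact ⟨z, hz, by rwa [Subtype.dist_eq, Real.dist_eq]⟩
  -- B avoids (a₀ - ε, a₀ + ε)
  have hB0 : ∀ x ∈ B, (x:ℝ) ≤ a₀ - ε ∨ a₀ + ε ≤ (x:ℝ) := by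
    intro x hx
    by_contra h
    push_neg at h
    obtain ⟨h1, h2⟩ := h
    have : a₀ < (x:ℝ) + ε := by linarith
    obtain ⟨y, hy, hylt⟩ := exists_lt_of_csInf_lt hsAne this
    obtain ⟨z, hzA, rfl⟩ := hy
    have hzge : a₀ ≤ (z:ℝ) := csInf_le hsAbdd ⟨z, hzA, rfl⟩
    have habs : |(x:ℝ) - (z:ℝ)| < ε := abs_lt.mpr ⟨by linarith, by linarith⟩
    linarith [hsep x hx z hzA]
  -- case split on a₀
  rcases le_or_gt (1+ε) a₀ with hc1 | hc2
  · -- Case 1 : 1 + ε ≤ a₀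
    set L := {x : XX | (x:ℝ) ≤ a₀ - ε} with hL
    set S₀ := {x : XX | a₀ ≤ (x:ℝ)} with hS₀
    have hBsub : B ⊆ L ∪ (S₀ \ A) := by
      intro x hx
      rcases hB0 x hx with h|h
      · left; exact h
      · right
        refine ⟨?_, fun hxA => hABdisj x hxA hx⟩
        show a₀ ≤ (x:ℝ); linarith
    have step : (μ B).toReal ≤ (μ L).toReal + (μ (S₀ \ A)).toReal := by
      calc (μ B).toReal ≤ (μ (L ∪ (S₀ \ A))).toReal := hmono hBsub
        _ ≤ ((μ L) + μ (S₀ \ A)).toReal :=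
            ENNReal.toReal_mono (by simp [hfin]) (measure_union_le _ _)
        _ = _ := ENNReal.toReal_add (hfin _) (hfin _)
    have haε1 : (1:ℝ) ≤ a₀ - ε := by linarith
    have haε0 : (0:ℝ) < a₀ - ε := by linarith
    have hLval : (μ L).toReal = 1 - (a₀ - ε)⁻¹ := by
      rw [hL, mu_Iic_sub haε1, ENNReal.toReal_ofReal]
      have : (a₀-ε)⁻¹ ≤ 1 := by
        rw [inv_le_one_iff₀]; right; exact haε1
      linarith
    have hdiff : (μ (S₀ \ A)).toReal = a₀⁻¹ - (μ A).toReal := by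
      rw [measure_diff hAsub hA.nullMeasurableSet (hfin A),
        ENNReal.toReal_sub_of_le (measure_mono hAsub) (hfin S₀),
        hS₀, mu_Ici_sub ha₀1, ENNReal.toReal_ofReal (by positivity)]
    rw [hLval, hdiff] at step
    have p1 : (0:ℝ) < (a₀-ε)⁻¹ := by positivity
    have hw : (2+ε)⁻¹ ≤ (a₀-ε)⁻¹ := inv_anti₀ haε0 (by linarith)
    have hv : (2:ℝ)⁻¹ ≤ a₀⁻¹ := inv_anti₀ (by linarith) ha₀2
    have huv : (2+ε)⁻¹ * 2⁻¹ ≤ (a₀-ε)⁻¹ * a₀⁻¹ :=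
      mul_le_mul hw hv (by norm_num) (le_of_lt p1)
    have key : (a₀-ε)⁻¹ - a₀⁻¹ = ε * ((a₀-ε)⁻¹ * a₀⁻¹) := by
      have h := aux_inv_diff haε0.ne' (by linarith : (0:ℝ) < a₀).ne'
      rw [h]; ring_nf
    have key2 : 1/2 - (2+ε)⁻¹ = ε * ((2+ε)⁻¹ * 2⁻¹) := by
      have h := aux_inv_diff (two_ne_zero (α := ℝ)) (by positivity : (0:ℝ) < 2+ε).ne'
      rw [one_div, h]; ring_nf
    have hmul := mul_le_mul_of_nonneg_left huv hε.le
    linarith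
  · -- Case 2 : a₀ < 1 + ε
    have hBhigh : B ⊆ {x : XX | a₀ + ε ≤ (x:ℝ)} := by
      intro x hx
      rcases hB0 x hx with h|h
      · exfalso; have h2 := x.2; simp only [mem_Ici] at h2; linarith
      · exact h
    rcases Set.eq_empty_or_nonempty B with hBe|hBne
    · rw [hBe]
      simp only [measure_empty, ENNReal.toReal_zero]
      positivity
    · set sB : Set ℝ := Subtype.val '' B with hsB
      have hsBne : sB.Nonempty := hBne.image _
      have hsBbdd : BddBelow sB := ⟨1, by rintro y ⟨z, _, rfl⟩; exact z.2⟩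
      set b₁ : ℝ := sInf sB with hb₁
      have hb₁ge : a₀ + ε ≤ b₁ :=
        le_csInf hsBne (by rintro y ⟨z, hz, rfl⟩; exact hBhigh hz)
      have hb₁1 : (1:ℝ) ≤ b₁ - ε := by linarith
      have hb₁0 : (0:ℝ) < b₁ := by linarith
      have hBsub2 : B ⊆ {x : XX | b₁ ≤ (x:ℝ)} := by
        intro x hx; exact csInf_le hsBbdd ⟨x, hx, rfl⟩
      have hA0 : ∀ z ∈ A, (z:ℝ) ≤ b₁ - ε ∨ b₁ + ε ≤ (z:ℝ) := by
        intro z hz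
        by_contra h
        push_neg at h
        obtain ⟨h1, h2⟩ := h
        have : b₁ < (z:ℝ) + ε := by linarith
        obtain ⟨y, hy, hylt⟩ := exists_lt_of_csInf_lt hsBne this
        obtain ⟨x, hxB, rfl⟩ := hy
        have hxge : b₁ ≤ (x:ℝ) := csInf_le hsBbdd ⟨x, hxB, rfl⟩
        have habs : |(x:ℝ) - (z:ℝ)| < ε := abs_lt.mpr ⟨by linarith, by linarith⟩
        linarith [hsep x hxB z hz]
      set hi := A ∩ {x : XX | b₁ + ε ≤ (x:ℝ)} with hhi
      set lo := {x : XX | (x:ℝ) ≤ b₁ - ε} with hlo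
      have hAsplit : A ⊆ lo ∪ hi := by
        intro z hz
        rcases hA0 z hz with h|h
        · left; exact h
        · right; exact ⟨hz, h⟩
      have hstep1 : (μ A).toReal ≤ (μ lo).toReal + (μ hi).toReal := by
        calc (μ A).toReal ≤ (μ (lo ∪ hi)).toReal := hmono hAsplit
          _ ≤ ((μ lo) + μ hi).toReal :=
              ENNReal.toReal_mono (by simp [hfin]) (measure_union_le _ _)
          _ = _ := ENNReal.toReal_add (hfin _) (hfin _)
      have hloval : (μ lo).toReal = 1 - (b₁ - ε)⁻¹ := by
        rw [hlo, mu_Iic_sub hb₁1, ENNReal.toReal_ofReal]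
        have : (b₁-ε)⁻¹ ≤ 1 := by
          rw [inv_le_one_iff₀]; right; exact hb₁1
        linarith
      have hdisj : Disjoint hi B := by
        rw [Set.disjoint_left]
        rintro x ⟨hxA, _⟩ hxB
        exact hABdisj x hxA hxB
      have hstep2 : (μ hi).toReal + (μ B).toReal ≤ b₁⁻¹ := by
        have hu : μ hi + μ B = μ (hi ∪ B) := (measure_union hdisj hBmeas).symm
        have hsub : hi ∪ B ⊆ {x : XX | b₁ ≤ (x:ℝ)} := by
          rintro x (⟨_, hx⟩|hx)
          · exact le_trans (by linarith : b₁ ≤ b₁ + ε) hx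
          · exact hBsub2 hx
        have := ENNReal.toReal_mono (hfin _) (le_trans hu.le (measure_mono hsub))
        rw [ENNReal.toReal_add (hfin _) (hfin _)] at this
        rwa [mu_Ici_sub (by linarith : (1:ℝ) ≤ b₁), ENNReal.toReal_ofReal (by positivity)] at this
      rw [hloval] at hstep1
      rcases le_or_gt (2+ε) b₁ with hb|hb
      · have : b₁⁻¹ ≤ (2+ε)⁻¹ := by
          apply inv_anti₀ (by positivity) hb
        have hhi0 : (0:ℝ) ≤ (μ hi).toReal := ENNReal.toReal_nonneg
        linarith
      · have hbε0 : (0:ℝ) < b₁ - ε := by linarith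
        have p1 : (0:ℝ) < b₁⁻¹ := by positivity
        have hu2 : (2:ℝ)⁻¹ ≤ (b₁-ε)⁻¹ := inv_anti₀ hbε0 (by linarith)
        have hv : (2+ε)⁻¹ ≤ b₁⁻¹ := inv_anti₀ hb₁0 hb.le
        have huv : (2:ℝ)⁻¹ * (2+ε)⁻¹ ≤ (b₁-ε)⁻¹ * b₁⁻¹ :=
          mul_le_mul hu2 hv (by positivity) (by positivity)
        have key : (b₁-ε)⁻¹ - b₁⁻¹ = ε * ((b₁-ε)⁻¹ * b₁⁻¹) := by
          have h := aux_inv_diff hbε0.ne' hb₁0.ne'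
          rw [h]; ring_nf
        have key2 : 1/2 - (2+ε)⁻¹ = ε * (2⁻¹ * (2+ε)⁻¹) := by
          have h := aux_inv_diff (two_ne_zero (α := ℝ)) (by positivity : (0:ℝ) < 2+ε).ne'
          rw [one_div, h]; ring_nf
        have hmul := mul_le_mul_of_nonneg_left huv hε.le
        linarith

lemma ofReal_half : ENNReal.ofReal ((1:ℝ) - 2⁻¹) = 1/2 := by
  rw [show (1 : ℝ) - 2⁻¹ = (2⁻¹:ℝ) by norm_num, ENNReal.ofReal_inv_of_pos (by norm_num)]
  norm_num

lemma Astar_meas : MeasurableSet {x : XX | (x:ℝ) ≤ 2} := meas_setOf_le'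

lemma Astar_half : (1/2 : ℝ≥0∞) ≤ muIci {x : XX | (x:ℝ) ≤ 2} := by
  rw [mu_Iic_sub (by norm_num), ofReal_half]

lemma Astar_thick {ε : ℝ} (hε : 0 < ε) :
    thickening ε {x : XX | (x:ℝ) ≤ 2} = {x : XX | (x:ℝ) < 2 + ε} := by
  ext x
  rw [mem_thickening_iff]
  constructor
  · rintro ⟨z, hz, hd⟩
    rw [Subtype.dist_eq, Real.dist_eq] at hd
    have := abs_lt.mp hd
    show (x:ℝ) < 2 + ε
    have hz2 : (z:ℝ) ≤ 2 := hz
    linarith [this.2]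
  · intro hx
    have hx2 : (x:ℝ) < 2 + ε := hx
    have h1x : (1:ℝ) ≤ (x:ℝ) := x.2
    refine ⟨⟨min (x:ℝ) 2, ?_⟩, ?_, ?_⟩
    · simp only [mem_Ici, le_min_iff]; exact ⟨h1x, by norm_num⟩
    · show min (x:ℝ) 2 ≤ 2; exact min_le_right _ _
    · rw [Subtype.dist_eq, Real.dist_eq]
      show |(x:ℝ) - min (x:ℝ) 2| < ε
      rcases le_or_gt (x:ℝ) 2 with h|h
      · rw [min_eq_left h]; simpa using hε
      · rw [min_eq_right h.le, abs_of_nonneg (by linarith)]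
        linarith

lemma sInf_conc {ε : ℝ} (hε : 0 < ε) :
    sInf {r : ℝ | ∃ A : Set XX, MeasurableSet A ∧ (1/2 : ℝ≥0∞) ≤ muIci A ∧
      r = (muIci (thickening ε A)).toReal} = 1 - (2+ε)⁻¹ := by
  have h2ε1 : (1:ℝ) ≤ 2 + ε := by linarith
  have hval : (muIci (thickening ε {x : XX | (x:ℝ) ≤ 2})).toReal = 1 - (2+ε)⁻¹ := by
    rw [Astar_thick hε, mu_Iio_sub h2ε1, ENNReal.toReal_ofReal]
    have : (2+ε)⁻¹ ≤ 1 := by rw [inv_le_one_iff₀]; right; exact h2ε1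
    linarith
  have hmem : (1 - (2+ε)⁻¹) ∈ {r : ℝ | ∃ A : Set XX, MeasurableSet A ∧
      (1/2 : ℝ≥0∞) ≤ muIci A ∧ r = (muIci (thickening ε A)).toReal} :=
    ⟨_, Astar_meas, Astar_half, hval.symm⟩
  apply le_antisymm
  · exact csInf_le ⟨0, by rintro r ⟨A, _, _, rfl⟩; exact ENNReal.toReal_nonneg⟩ hmem
  · apply le_csInf ⟨_, hmem⟩
    rintro r ⟨A, hAm, hA2, rfl⟩
    have hsum : (muIci (thickening ε A)).toReal + (muIci ((thickening ε A)ᶜ)).toReal = 1 := by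
      rw [← ENNReal.toReal_add (measure_ne_top _ _) (measure_ne_top _ _),
        measure_add_measure_compl isOpen_thickening.measurableSet, measure_univ]
      simp
    have := key_lower hε hAm hA2
    linarith

/-- For `X = [1,∞)` with density `1/x²`: `α_X(ε) = 1/(2+ε)` for all `ε ≥ 0`;
consequently `∫₀^∞ α_X = ∞` (the concentration function is not integrable), so
the concentration dimension defined with integration to infinity is `0`. -/
theorem concFn_Ici_one_inv_sq :
    (∀ ε : ℝ, 0 ≤ ε → concFn muIci ε = 1/(2+ε)) ∧
    (∫⁻ ε in Set.Ioi (0:ℝ), ENNReal.ofReal (concFn muIci ε)) = ⊤ ∧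
    ¬ IntegrableOn (concFn muIci) (Set.Ioi 0) := by
  have hconc : ∀ ε : ℝ, 0 ≤ ε → concFn muIci ε = 1/(2+ε) := by
    intro ε hε
    rcases eq_or_lt_of_le hε with h|h
    · rw [concFn, if_pos (le_of_eq h.symm), ← h]
      norm_num
    · rw [concFn, if_neg (not_le.mpr h), sInf_conc h, one_div]
      ring
  have hni : ¬ IntegrableOn (concFn muIci) (Set.Ioi 0) := by
    intro h
    have h2 : IntegrableOn (fun ε : ℝ => 1/(2+ε)) (Set.Ioi 0) :=
      h.congr_fun (fun x hx => hconc x (le_of_lt hx)) measurableSet_Ioi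
    have h3 : IntegrableOn (fun ε : ℝ => 1/(2+ε)) (Set.Ioi 2) :=
      h2.mono_set (Ioi_subset_Ioi (by norm_num))
    have h4 : IntegrableOn (fun x : ℝ => x⁻¹) (Set.Ioi 2) := by
      apply Integrable.mono' (h3.const_mul 2) measurable_inv.aestronglyMeasurable
      filter_upwards [ae_restrict_mem measurableSet_Ioi] with x hx
      have hx2 : (2:ℝ) < x := hx
      rw [Real.norm_eq_abs, abs_of_pos (by positivity)]
      rw [mul_one_div, inv_eq_one_div, div_le_div_iff₀ (by linarith) (by linarith)]
      linarith
    exact not_IntegrableOn_Ioi_inv h4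
  refine ⟨hconc, ?_, hni⟩
  by_contra htop
  apply hni
  constructor
  · have mg : Measurable (fun ε : ℝ => 1/(2+ε)) := by
      simp only [one_div]
      exact (measurable_id.const_add 2).inv
    apply mg.aestronglyMeasurable.congr
    filter_upwards [ae_restrict_mem measurableSet_Ioi] with x hx
    exact (hconc x (le_of_lt hx)).symm
  · have hnn : 0 ≤ᵐ[volume.restrict (Set.Ioi (0:ℝ))] concFn muIci := by
      filter_upwards [ae_restrict_mem measurableSet_Ioi] with x hx
      rw [hconc x (le_of_lt hx)]
      have : (0:ℝ) < x := hx
      positivity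
    rw [hasFiniteIntegral_iff_ofReal hnn]
    exact lt_top_iff_ne_top.mpr htop
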